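/- If the j-th column distance of an (n,k) convolutional code attains the maximum value d_j^c(C) = (n-k)(j+1)+1 for some j, then d_i^c(C) = (n-k)(i+1)+1 for all i <= j. -/

import Mathlib

open Polynomial Matrix Finset

/-- Total Hamming weight of the coefficient vectors of a polynomial vector. -/
noncomputable def wt {F : Type*} [Field F] {n : ℕ} (v : Fin n → Polynomial F) : ℕ :=
  ∑ i, (v i).support.card

/-- Hamming weight of the degree-`j` truncation of a polynomial vector. -/
noncomputable def wtTrunc {F : Type*} [Field F] {n : ℕ} (j : ℕ) (v : Fin n → Polynomial F) : ℕ :=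
  ∑ i, ((v i).support.filter (fun m => m ≤ j)).card

/-- The `j`-th column distance of a convolutional code `C ⊆ F[z]^n`. -/
noncomputable def dcol {F : Type*} [Field F] {n : ℕ} (C : Set (Fin n → Polynomial F)) (j : ℕ) : ℕ :=
  sInf {w | ∃ v ∈ C, (fun i => (v i).coeff 0) ≠ (0 : Fin n → F) ∧ wtTrunc j v = w}

/-- The free distance of a convolutional code `C ⊆ F[z]^n`. -/
noncomputable def dfree {F : Type*} [Field F] {n : ℕ} (C : Set (Fin n → Polynomial F)) : ℕ :=
  sInf {w | ∃ v ∈ C, v ≠ 0 ∧ wt v = w}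

/-- The kernel code of a polynomial parity-check matrix given by its coefficient
matrices `H i`: codewords `v(z)` satisfy `∑ i, H_{m-i} v_i = 0` for all `m`. -/
def kerCode {F : Type*} [Field F] {r n : ℕ} (H : ℕ → Matrix (Fin r) (Fin n) F) :
    Set (Fin n → Polynomial F) :=
  {v | ∀ m : ℕ, ∀ a : Fin r,
    ∑ i ∈ Finset.range (m + 1), (H i).mulVec (fun b => (v b).coeff (m - i)) a = 0}

/-- The image code of an `n × k` polynomial generator matrix. -/
def imCode {F : Type*} [Field F] {n k : ℕ} (G : Matrix (Fin n) (Fin k) (Polynomial F)) :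
    Set (Fin n → Polynomial F) :=
  {v | ∃ u : Fin k → Polynomial F, v = G.mulVec u}

/-- The sliding (truncated, lower block triangular Toeplitz) parity-check matrix `H_j`. -/
def slidingH {F : Type*} [Field F] {r n : ℕ} (H : ℕ → Matrix (Fin r) (Fin n) F) (j : ℕ) :
    Matrix (Fin (j+1) × Fin r) (Fin (j+1) × Fin n) F :=
  fun p q => if q.1.val ≤ p.1.val then H (p.1.val - q.1.val) p.2 q.2 else 0

/-- The sliding parity-check matrix `H_j` with rows and columns flattened. -/
def slidingHFlat {F : Type*} [Field F] {r n : ℕ} (hr : 0 < r) (hn : 0 < n)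
    (H : ℕ → Matrix (Fin r) (Fin n) F) (j : ℕ) :
    Matrix (Fin ((j+1)*r)) (Fin ((j+1)*n)) F :=
  fun a b => if b.val / n ≤ a.val / r then
      H (a.val / r - b.val / n) ⟨a.val % r, Nat.mod_lt _ hr⟩ ⟨b.val % n, Nat.mod_lt _ hn⟩
    else 0

/-- The sliding (truncated, lower block triangular Toeplitz) generator matrix `G_j`. -/
def slidingG {F : Type*} [Field F] {n k : ℕ} (G : ℕ → Matrix (Fin n) (Fin k) F) (j : ℕ) :
    Matrix (Fin (j+1) × Fin n) (Fin (j+1) × Fin k) F :=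
  fun p q => if q.1.val ≤ p.1.val then G (p.1.val - q.1.val) p.2 q.2 else 0

/-- The sliding generator matrix `G_j` with rows and columns flattened. -/
def slidingGFlat {F : Type*} [Field F] {n k : ℕ} (hn : 0 < n) (hk : 0 < k)
    (G : ℕ → Matrix (Fin n) (Fin k) F) (j : ℕ) :
    Matrix (Fin ((j+1)*n)) (Fin ((j+1)*k)) F :=
  fun a b => if b.val / k ≤ a.val / n then
      G (a.val / n - b.val / k) ⟨a.val % n, Nat.mod_lt _ hn⟩ ⟨b.val % k, Nat.mod_lt _ hk⟩
    else 0

/-! Choose a set `S` of `k` rows on which the constant coefficient matrix `G(0)` is invertible.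
Degree by degree, any codeword can be modified from degree `i + 1` on (by adding `z ^ T G(z) e`
with `G(0) e` prescribed on `S`) so that its coefficients vanish on `S` and hence have weight at
most `n - k`; this gives `d_{i+d} ≤ d_i + d (n - k)`. From `i = 0`, starting at a codeword whose
constant term is a unit vector on `S`, this is the bound `d_i ≤ (n - k)(i + 1) + 1`; from `i` to
`j`, maximality of `d_j` forces the reverse inequality. -/

theorem Matrix.exists_finset_card_eq_rank_surjective {m n K : Type*} [Field K] [Fintype m]
    [Fintype n] (A : Matrix m n K) :
    ∃ S : Finset m, #S = A.rank ∧ Function.Surjective fun x => S.restrict (A *ᵥ x) := by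
  classical
  obtain ⟨b, -, -, hspan, hli⟩ :=
    exists_linearIndepOn_extension (linearIndepOn_empty K A.row) (Set.empty_subset Set.univ)
  set S := b.toFinset
  let B : Matrix S n K := A.submatrix (↑) id
  have hB : LinearIndependent K B.row :=
    hli.linearIndependent.comp _ (Equiv.subtypeEquivRight fun _ => Set.mem_toFinset).injective
  have hBrank : B.rank = #S := by simpa using hB.rank_matrix
  refine ⟨S, ?_, ?_⟩
  · have hrange : Set.range B.row = A.row '' b :=
      (Set.range_comp A.row ((↑) : S → m)).trans (by simp [S])
    have hspan' : Submodule.span K (A.row '' b) = Submodule.span K (Set.range A.row) :=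
      le_antisymm (Submodule.span_mono (Set.image_subset_range _ _))
        (Submodule.span_le.mpr (by simpa using hspan))
    rw [← hBrank, rank_eq_finrank_span_row, rank_eq_finrank_span_row, hrange, hspan']
  · have hB_range : LinearMap.range B.mulVecLin = ⊤ := by
      apply Submodule.eq_top_of_finrank_eq
      rw [← rank, hBrank]
      simp
    exact LinearMap.range_eq_top.mp hB_range

theorem hammingNorm_le_card_compl {ι : Type*} [Fintype ι] [DecidableEq ι] {β : ι → Type*}
    [∀ i, Zero (β i)] [∀ i, DecidableEq (β i)] {x : ∀ i, β i} {S : Finset ι}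
    (hx : ∀ i ∈ S, x i = 0) : hammingNorm x ≤ #Sᶜ :=
  card_le_card fun i hi => mem_compl.mpr fun hiS => (mem_filter.mp hi).2 (hx i hiS)

section ColumnDistance

variable {F : Type*} [Field F] {n k : ℕ}

section Weight

variable [DecidableEq F]

theorem wtTrunc_eq_sum_hammingNorm (j : ℕ) (v : Fin n → F[X]) :
    wtTrunc j v = ∑ m ∈ range (j + 1), hammingNorm fun a => (v a).coeff m := by
  have hsupp : ∀ a, (v a).support.filter (· ≤ j) =
      (range (j + 1)).filter fun m => (v a).coeff m ≠ 0 := by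
    intro a
    ext m
    simp [and_comm]
  simp only [wtTrunc, hammingNorm, hsupp, card_filter]
  exact sum_comm

theorem wtTrunc_succ (j : ℕ) (v : Fin n → F[X]) :
    wtTrunc (j + 1) v = wtTrunc j v + hammingNorm fun a => (v a).coeff (j + 1) := by
  simp only [wtTrunc_eq_sum_hammingNorm, sum_range_succ _ (j + 1)]

theorem wtTrunc_congr {j : ℕ} {v w : Fin n → F[X]}
    (h : ∀ a, ∀ m ≤ j, (v a).coeff m = (w a).coeff m) : wtTrunc j v = wtTrunc j w := by
  simp only [wtTrunc_eq_sum_hammingNorm]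
  exact sum_congr rfl fun m hm => by simp only [h _ m (Nat.lt_succ_iff.mp (mem_range.mp hm))]

end Weight

theorem dcol_le_wtTrunc {C : Set (Fin n → F[X])} {v : Fin n → F[X]} {j : ℕ} (hv : v ∈ C)
    (h0 : (fun a => (v a).coeff 0) ≠ 0) : dcol C j ≤ wtTrunc j v :=
  Nat.sInf_le ⟨v, hv, h0, rfl⟩

theorem exists_wtTrunc_eq_dcol {C : Set (Fin n → F[X])}
    (hC : ∃ v ∈ C, (fun a => (v a).coeff 0) ≠ 0) (j : ℕ) :
    ∃ v ∈ C, (fun a => (v a).coeff 0) ≠ 0 ∧ wtTrunc j v = dcol C j :=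
  let ⟨v, hv, h0⟩ := hC
  Nat.sInf_mem (s := {w | ∃ v ∈ C, (fun a => (v a).coeff 0) ≠ 0 ∧ wtTrunc j v = w})
    ⟨_, v, hv, h0, rfl⟩

theorem dcol_eq_zero_of_not_exists {C : Set (Fin n → F[X])}
    (hC : ¬∃ v ∈ C, (fun a => (v a).coeff 0) ≠ 0) (j : ℕ) : dcol C j = 0 :=
  Nat.sInf_eq_zero.mpr <| .inr <| Set.eq_empty_of_forall_notMem fun _ ⟨v, hv, h0, _⟩ =>
    hC ⟨v, hv, h0⟩

theorem coeff_zero_mulVec (G : Matrix (Fin n) (Fin k) F[X]) (u : Fin k → F[X]) (a : Fin n) :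
    ((G *ᵥ u) a).coeff 0 = (G.map constantCoeff *ᵥ fun b => (u b).coeff 0) a :=
  RingHom.map_mulVec constantCoeff G u a

variable {G : Matrix (Fin n) (Fin k) F[X]} {S : Finset (Fin n)}

theorem exists_mem_imCode_coeff_eq_zero_on
    (hS : Function.Surjective fun e => S.restrict (G.map constantCoeff *ᵥ e))
    {v : Fin n → F[X]} (hv : v ∈ imCode G) (T : ℕ) :
    ∃ v' ∈ imCode G, (∀ a, ∀ m < T, (v' a).coeff m = (v a).coeff m) ∧
      ∀ s ∈ S, (v' s).coeff T = 0 := by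
  obtain ⟨u, rfl⟩ := hv
  obtain ⟨e, he⟩ := hS fun s => -((G *ᵥ u) s).coeff T
  let w : Fin k → F[X] := fun b => C (e b)
  have hcoeff : ∀ a m, ((G *ᵥ (u + (X ^ T : F[X]) • w)) a).coeff m =
      ((G *ᵥ u) a).coeff m + if T ≤ m then ((G *ᵥ w) a).coeff (m - T) else 0 := by
    intro a m
    simp [mulVec_add, mulVec_smul, coeff_X_pow_mul']
  refine ⟨G *ᵥ (u + (X ^ T : F[X]) • w), ⟨_, rfl⟩,
    fun a m hm => by simp [hcoeff, not_le.mpr hm], fun s hs => ?_⟩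
  have hes : (G.map constantCoeff *ᵥ e) s = -((G *ᵥ u) s).coeff T := congrFun he ⟨s, hs⟩
  simp [hcoeff, coeff_zero_mulVec, w, hes]

theorem exists_mem_imCode_wtTrunc_add_le
    (hS : Function.Surjective fun e => S.restrict (G.map constantCoeff *ᵥ e))
    {v : Fin n → F[X]} (hv : v ∈ imCode G) (i d : ℕ) :
    ∃ v' ∈ imCode G, (∀ a, (v' a).coeff 0 = (v a).coeff 0) ∧
      wtTrunc (i + d) v' ≤ wtTrunc i v + d * #Sᶜ := by
  classical
  induction d with
  | zero => exact ⟨v, hv, fun _ => rfl, by simp⟩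
  | succ d ih =>
    obtain ⟨v', hv', h0', hle'⟩ := ih
    obtain ⟨v'', hv'', hagree, hvanish⟩ := exists_mem_imCode_coeff_eq_zero_on hS hv' (i + d + 1)
    refine ⟨v'', hv'', fun a => (hagree a 0 (by omega)).trans (h0' a), ?_⟩
    calc wtTrunc (i + (d + 1)) v''
        = wtTrunc (i + d) v' + hammingNorm fun a => (v'' a).coeff (i + d + 1) := by
          rw [← add_assoc, wtTrunc_succ, wtTrunc_congr fun a m hm => hagree a m (by omega)]
      _ ≤ wtTrunc i v + d * #Sᶜ + #Sᶜ := add_le_add hle' (hammingNorm_le_card_compl hvanish)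
      _ = wtTrunc i v + (d + 1) * #Sᶜ := by ring

theorem dcol_add_le (hS : Function.Surjective fun e => S.restrict (G.map constantCoeff *ᵥ e))
    (i d : ℕ) : dcol (imCode G) (i + d) ≤ dcol (imCode G) i + d * #Sᶜ := by
  by_cases hC : ∃ v ∈ imCode G, (fun a => (v a).coeff 0) ≠ 0
  · obtain ⟨v, hv, h0, hvi⟩ := exists_wtTrunc_eq_dcol hC i
    obtain ⟨v', hv', h0', hle⟩ := exists_mem_imCode_wtTrunc_add_le hS hv i d
    calc dcol (imCode G) (i + d) ≤ wtTrunc (i + d) v' :=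
          dcol_le_wtTrunc hv' (by simpa only [h0'] using h0)
      _ ≤ dcol (imCode G) i + d * #Sᶜ := hvi ▸ hle
  · simp [dcol_eq_zero_of_not_exists hC]

theorem dcol_zero_le (hS : Function.Surjective fun e => S.restrict (G.map constantCoeff *ᵥ e))
    (hS₀ : S.Nonempty) : dcol (imCode G) 0 ≤ #Sᶜ + 1 := by
  classical
  obtain ⟨s₀, hs₀⟩ := hS₀
  obtain ⟨e, he⟩ := hS (S.restrict (Pi.single s₀ 1 : Fin n → F))
  set v := G *ᵥ fun b => C (e b)
  have hv₀ : ∀ s ∈ S, (v s).coeff 0 = (Pi.single s₀ 1 : Fin n → F) s := fun s hs => by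
    rw [coeff_zero_mulVec]
    simp only [coeff_C_zero]
    exact congrFun he ⟨s, hs⟩
  have hcard : #(S.erase s₀)ᶜ = #Sᶜ + 1 := by
    have := card_le_univ S
    have := card_pos.mpr ⟨s₀, hs₀⟩
    rw [card_compl, card_compl, card_erase_of_mem hs₀]
    omega
  calc dcol (imCode G) 0 ≤ wtTrunc 0 v :=
        dcol_le_wtTrunc (C := imCode G) ⟨_, rfl⟩ fun h => by
          simpa using (hv₀ s₀ hs₀).symm.trans (congrFun h s₀)
    _ = hammingNorm fun a => (v a).coeff 0 := by simp [wtTrunc_eq_sum_hammingNorm]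
    _ ≤ #(S.erase s₀)ᶜ := hammingNorm_le_card_compl fun s hs => by
        rw [hv₀ s (mem_of_mem_erase hs), Pi.single_eq_of_ne (ne_of_mem_erase hs)]
    _ = #Sᶜ + 1 := hcard

end ColumnDistance

theorem column_distance_maximal_downward_general {F : Type*} [Field F] {n k j : ℕ}
    (hk : 1 ≤ k)
    (G : Matrix (Fin n) (Fin k) (Polynomial F))
    (hG0 : (Matrix.of fun a b => (G a b).coeff 0).rank = k)
    (hj : dcol (imCode G) j = (n - k) * (j + 1) + 1) :
    ∀ i ≤ j, dcol (imCode G) i = (n - k) * (i + 1) + 1 := by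
  obtain ⟨S, hSk, hS⟩ := (G.map constantCoeff).exists_finset_card_eq_rank_surjective
  replace hSk : #S = k := hSk.trans hG0
  have hSc : #Sᶜ = n - k := by rw [card_compl, Fintype.card_fin, hSk]
  have hS₀ : S.Nonempty := card_pos.mp (by omega)
  intro i hi
  obtain ⟨d, rfl⟩ := Nat.exists_eq_add_of_le hi
  have upper₀ := dcol_zero_le hS hS₀
  have upper := dcol_add_le hS 0 i
  have lower := dcol_add_le hS i d
  rw [zero_add] at upper
  rw [hj] at lower
  rw [hSc] at upper₀ upper lower
  apply le_antisymm <;> nlinarith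

/-- If the `j`-th column distance attains its maximal value `(n-k)(j+1)+1`, then all
previous column distances are maximal as well. -/
theorem column_distance_maximal_downward {F : Type*} [Field F] [DecidableEq F] {n k j : ℕ}
    (hk : 1 ≤ k) (hkn : k < n)
    (G : Matrix (Fin n) (Fin k) (Polynomial F))
    (hG0 : (Matrix.of fun a b => (G a b).coeff 0).rank = k)
    (hj : dcol (imCode G) j = (n - k) * (j + 1) + 1) :
    ∀ i ≤ j, dcol (imCode G) i = (n - k) * (i + 1) + 1 :=
  column_distance_maximal_downward_general hk G hG0 hj
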